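/- arXiv:1701.04125 — 7 statements merged into one kernel-verified Lean document; each statement's English description precedes it below -/
import Mathlib

section
/- Let (X, μ) be a measure space, let V₁ and V₂ be disjoint measurable subsets of X with 0 < μ(V₁) < ∞ and 0 < μ(V₂) < ∞, let f : X → ℝ be measurable with f² integrable on V₁ and on V₂, and let m ∈ ℝ. Then ∫_{V₁} (f − m)² dμ + ∫_{V₂} (f − m)² dμ ≥ (1/2) · min(μ(V₁), μ(V₂)) · (⨍_{V₁} f dμ − ⨍_{V₂} f dμ)². -/
open MeasureTheory

lemma aux_one_set {X : Type*} [MeasurableSpace X] (μ : Measure X)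
    (V : Set X) (h0 : 0 < μ V) (htop : μ V < ⊤)
    (f : X → ℝ) (hf : Measurable f)
    (hint : IntegrableOn (fun x => (f x) ^ 2) V μ) (m : ℝ) :
    (∫ x in V, (f x - m) ^ 2 ∂μ) ≥
      (μ V).toReal * ((⨍ x in V, f x ∂μ) - m) ^ 2 := by
  have hne : μ V ≠ 0 := h0.ne'
  have hnetop : μ V ≠ ⊤ := htop.ne
  have htr : 0 < (μ V).toReal := ENNReal.toReal_pos hne hnetop
  have hconst : IntegrableOn (fun _ : X => (1 : ℝ)) V μ :=
    integrableOn_const htop.ne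
  have hfint : IntegrableOn f V μ := by
    refine Integrable.mono' ((hint.add hconst).div_const 2)
      hf.aestronglyMeasurable ?_
    filter_upwards with x
    rw [Real.norm_eq_abs]
    have h1 : (|f x| - 1) ^ 2 ≥ 0 := sq_nonneg _
    have h2 : |f x| ^ 2 = f x ^ 2 := sq_abs _
    simp only [Pi.add_apply, Pi.div_apply]
    nlinarith
  have hgint : IntegrableOn (fun x => (f x - m) ^ 2) V μ := by
    have heq : (fun x => (f x - m) ^ 2)
        = fun x => (f x ^ 2 + ((-2 * m) * f x + m ^ 2 * 1)) := by
      funext x; ring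
    rw [heq]
    exact hint.add ((hfint.const_mul _).add (hconst.const_mul _))
  have hconstm : IntegrableOn (fun _ : X => m) V μ :=
    integrableOn_const htop.ne
  have hsub : IntegrableOn (fun x => f x - m) V μ := hfint.sub hconstm
  have hJ := ((Even.convexOn_pow (even_two) :
      ConvexOn ℝ Set.univ fun y : ℝ => y ^ 2)).map_set_average_le
    (continuous_pow 2).continuousOn isClosed_univ hne hnetop
    (Filter.Eventually.of_forall fun x => Set.mem_univ _) hsub hgint
  have havg : (⨍ x in V, (f x - m) ∂μ) = (⨍ x in V, f x ∂μ) - m := by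
    rw [setAverage_eq, setAverage_eq, integral_sub hfint hconstm, setIntegral_const,
      smul_sub, smul_smul]
    simp only [smul_eq_mul]
    field_simp
    rw [sub_div, mul_div_cancel_left₀ _ (show μ.real V ≠ 0 from htr.ne')]
  rw [havg] at hJ
  have hI : (∫ x in V, (f x - m) ^ 2 ∂μ)
      = (μ V).toReal * ⨍ x in V, (f x - m) ^ 2 ∂μ := by
    rw [setAverage_eq]
    simp only [smul_eq_mul]
    field_simp
    exact (mul_div_cancel_right₀ _ (show μ.real V ≠ 0 from htr.ne')).symm
  rw [hI]
  have := mul_le_mul_of_nonneg_left hJ htr.le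
  linarith

/-- Measure-theoretic core of Lemma 3.3: for disjoint sets `V₁, V₂` of positive finite
measure and any `m`, the squared `L²` masses of `f - m` on `V₁` and `V₂` control the
square of the difference of the averages of `f`. -/
theorem stmt_0 {X : Type*} [MeasurableSpace X] (μ : Measure X)
    (V₁ V₂ : Set X) (hV : Disjoint V₁ V₂)
    (hm₁ : MeasurableSet V₁) (hm₂ : MeasurableSet V₂)
    (h₁0 : 0 < μ V₁) (h₁top : μ V₁ < ⊤)
    (h₂0 : 0 < μ V₂) (h₂top : μ V₂ < ⊤)
    (f : X → ℝ) (hf : Measurable f)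
    (hint₁ : IntegrableOn (fun x => (f x) ^ 2) V₁ μ)
    (hint₂ : IntegrableOn (fun x => (f x) ^ 2) V₂ μ)
    (m : ℝ) :
    (∫ x in V₁, (f x - m) ^ 2 ∂μ) + ∫ x in V₂, (f x - m) ^ 2 ∂μ ≥
      (1 / 2) * min (μ V₁).toReal (μ V₂).toReal *
        ((⨍ x in V₁, f x ∂μ) - ⨍ x in V₂, f x ∂μ) ^ 2 := by
  have A := aux_one_set μ V₁ h₁0 h₁top f hf hint₁ m
  have B := aux_one_set μ V₂ h₂0 h₂top f hf hint₂ m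
  set a := ⨍ x in V₁, f x ∂μ
  set b := ⨍ x in V₂, f x ∂μ
  have h1 : 0 < (μ V₁).toReal := ENNReal.toReal_pos h₁0.ne' h₁top.ne
  have h2 : 0 < (μ V₂).toReal := ENNReal.toReal_pos h₂0.ne' h₂top.ne
  have hmin1 : min (μ V₁).toReal (μ V₂).toReal ≤ (μ V₁).toReal := min_le_left _ _
  have hmin2 : min (μ V₁).toReal (μ V₂).toReal ≤ (μ V₂).toReal := min_le_right _ _
  nlinarith [sq_nonneg (a - m), sq_nonneg (b - m), sq_nonneg (a + b - 2 * m),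
    lt_min h1 h2]
end

section
/- Let n ≥ 2 be an integer, let 0 < ε ≤ 1, let t₀ ∈ [2ε, 3ε], let a : ℝ → ℝ be continuously differentiable on [0, t₀], and let w : ℝ → ℝ be measurable with a′(t)²·w(t) integrable on [0, t₀], with w(t) ≥ 1 for all t ∈ [0, 2ε] and w(t) ≥ ε^{−2(n−1)} for all t ∈ [2ε, t₀]. If |a(t₀)| ≤ (1/2)|a(0)|, then ∫₀^{t₀} a′(t)² w(t) dt ≥ a(0)²/(16ε). -/
open intervalIntegral MeasureTheory Set

/-- Cauchy–Schwarz on an interval for a continuous function. -/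
lemma cs_aux (f : ℝ → ℝ) (c b : ℝ) (hcb : c ≤ b) (hf : ContinuousOn f (Icc c b)) :
    (∫ t in c..b, f t) ^ 2 ≤ (b - c) * ∫ t in c..b, (f t) ^ 2 := by
  rcases eq_or_lt_of_le hcb with rfl | hlt
  · simp
  set L := b - c with hL
  have hL0 : 0 < L := by simp [hL]; linarith
  set I := ∫ t in c..b, f t with hI
  have hfi : IntervalIntegrable f volume c b :=
    (hf.mono (by rw [Set.uIcc_of_le hcb])).intervalIntegrable
  have hfi2 : IntervalIntegrable (fun t => (f t) ^ 2) volume c b := by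
    apply ContinuousOn.intervalIntegrable
    rw [Set.uIcc_of_le hcb]
    exact (hf.pow 2)
  have h0 : 0 ≤ ∫ t in c..b, (L * f t - I) ^ 2 :=
    intervalIntegral.integral_nonneg hcb (fun t _ => sq_nonneg _)
  have hexp : ∫ t in c..b, (L * f t - I) ^ 2
      = L ^ 2 * (∫ t in c..b, (f t) ^ 2) - 2 * L * I * I + I ^ 2 * L := by
    have : ∀ t, (L * f t - I) ^ 2 = L ^ 2 * (f t) ^ 2 - (2 * L * I) * f t + I ^ 2 := by
      intro t; ring
    simp_rw [this]
    rw [intervalIntegral.integral_add ((hfi2.const_mul _).sub (hfi.const_mul _))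
      intervalIntegrable_const,
      intervalIntegral.integral_sub (hfi2.const_mul _) (hfi.const_mul _),
      intervalIntegral.integral_const_mul, intervalIntegral.integral_const_mul,
      intervalIntegral.integral_const]
    simp [hL]; ring
  rw [hexp] at h0
  nlinarith [h0, hL0]

lemma cube_aux (e K : ℝ) (he0 : 0 < e) (he1 : e ≤ 1) (hK : 0 ≤ K) :
    e * (e ^ 2 * K) ≤ 2 * e * K := by
  have h2 : e ^ 2 ≤ 1 := by nlinarith
  have hek : 0 ≤ e * K := mul_nonneg he0.le hK
  calc e * (e ^ 2 * K) = e ^ 2 * (e * K) := by ring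
  _ ≤ 1 * (e * K) := mul_le_mul_of_nonneg_right h2 hek
  _ ≤ 2 * e * K := by linarith

lemma sum_sq_aux (u v c : ℝ) (h : c ^ 2 ≤ 4 * (u + v) ^ 2) :
    c ^ 2 ≤ 8 * (u ^ 2 + v ^ 2) := by nlinarith [sq_nonneg (u - v)]

/-- Inequality (conf5′) in the proof of Proposition 3.1: if the Fourier coefficient `a`
decays by half at time `t₀ ∈ [2ε, 3ε]`, then the weighted radial energy is at least
`a(0)²/(16ε)`. -/
theorem stmt_3 (n : ℕ) (hn : 2 ≤ n) (ε : ℝ) (hε0 : 0 < ε) (hε1 : ε ≤ 1)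
    (t₀ : ℝ) (ht₀ : t₀ ∈ Set.Icc (2 * ε) (3 * ε))
    (a a' : ℝ → ℝ)
    (hderiv : ∀ t ∈ Set.Icc (0 : ℝ) t₀, HasDerivWithinAt a (a' t) (Set.Icc 0 t₀) t)
    (hcont : ContinuousOn a' (Set.Icc 0 t₀))
    (w : ℝ → ℝ) (hw : Measurable w)
    (hint : IntervalIntegrable (fun t => (a' t) ^ 2 * w t) MeasureTheory.volume 0 t₀)
    (hw1 : ∀ t ∈ Set.Icc (0 : ℝ) (2 * ε), 1 ≤ w t)
    (hwε : ∀ t ∈ Set.Icc (2 * ε) t₀, (ε ^ (2 * (n - 1)))⁻¹ ≤ w t)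
    (hsmall : |a t₀| ≤ (1 / 2) * |a 0|) :
    ∫ t in (0 : ℝ)..t₀, (a' t) ^ 2 * w t ≥ (a 0) ^ 2 / (16 * ε) := by
  obtain ⟨h2t, ht3⟩ := ht₀
  have h20 : (0 : ℝ) ≤ 2 * ε := by linarith
  have ht0 : (0 : ℝ) ≤ t₀ := le_trans h20 h2t
  -- continuity of a
  have hacont : ContinuousOn a (Icc 0 t₀) := fun t ht =>
    (hderiv t ht).continuousWithinAt
  -- FTC on subintervals
  have ftc : ∀ c b : ℝ, 0 ≤ c → c ≤ b → b ≤ t₀ →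
      ∫ t in c..b, a' t = a b - a c := by
    intro c b hc hcb hb
    apply intervalIntegral.integral_eq_sub_of_hasDeriv_right_of_le hcb
    · exact hacont.mono (Icc_subset_Icc hc hb)
    · intro x hx
      have hx' : x ∈ Icc (0:ℝ) t₀ := ⟨le_trans hc hx.1.le, le_trans hx.2.le hb⟩
      have : HasDerivAt a (a' x) x :=
        (hderiv x hx').hasDerivAt (Icc_mem_nhds (lt_of_le_of_lt hc hx.1)
          (lt_of_lt_of_le hx.2 hb))
      exact this.hasDerivWithinAt
    · exact ((hcont.mono (Icc_subset_Icc hc hb)).mono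
        (by rw [Set.uIcc_of_le hcb])).intervalIntegrable
  have ha'cont : ∀ c b : ℝ, 0 ≤ c → c ≤ b → b ≤ t₀ → ContinuousOn a' (Icc c b) :=
    fun c b hc hcb hb => hcont.mono (Icc_subset_Icc hc hb)
  have ha'sq : ∀ c b : ℝ, 0 ≤ c → c ≤ b → b ≤ t₀ →
      IntervalIntegrable (fun t => (a' t) ^ 2) volume c b := by
    intro c b hc hcb hb
    apply ContinuousOn.intervalIntegrable
    rw [Set.uIcc_of_le hcb]
    exact (ha'cont c b hc hcb hb).pow 2
  -- integrability of weighted integrand on pieces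
  have hint1 : IntervalIntegrable (fun t => (a' t) ^ 2 * w t) volume 0 (2 * ε) :=
    hint.mono_set (by
      rw [Set.uIcc_of_le h20, Set.uIcc_of_le ht0]
      exact Icc_subset_Icc le_rfl h2t)
  have hint2 : IntervalIntegrable (fun t => (a' t) ^ 2 * w t) volume (2 * ε) t₀ :=
    hint.mono_set (by
      rw [Set.uIcc_of_le h2t, Set.uIcc_of_le ht0]
      exact Icc_subset_Icc h20 le_rfl)
  -- split the integral
  have hsplit : ∫ t in (0:ℝ)..t₀, (a' t) ^ 2 * w t
      = (∫ t in (0:ℝ)..(2*ε), (a' t) ^ 2 * w t)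
        + ∫ t in (2*ε)..t₀, (a' t) ^ 2 * w t :=
    (intervalIntegral.integral_add_adjacent_intervals hint1 hint2).symm
  set J1 := ∫ t in (0:ℝ)..(2*ε), (a' t) ^ 2 with hJ1
  set J2 := ∫ t in (2*ε)..t₀, (a' t) ^ 2 with hJ2
  set K1 := ∫ t in (0:ℝ)..(2*ε), (a' t) ^ 2 * w t with hK1
  set K2 := ∫ t in (2*ε)..t₀, (a' t) ^ 2 * w t with hK2
  -- weight comparisons
  have hK1ge : J1 ≤ K1 := by
    apply intervalIntegral.integral_mono_on h20 (ha'sq 0 (2*ε) le_rfl h20 h2t) hint1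
    intro t ht
    nlinarith [sq_nonneg (a' t), hw1 t ht]
  have hwlow : ∀ t ∈ Icc (2*ε) t₀, (ε ^ 2)⁻¹ ≤ w t := by
    intro t ht
    refine le_trans ?_ (hwε t ht)
    have hple : ε ^ (2 * (n - 1)) ≤ ε ^ 2 :=
      pow_le_pow_of_le_one hε0.le hε1 (by omega)
    exact inv_anti₀ (by positivity) hple
  have hK2ge : (ε ^ 2)⁻¹ * J2 ≤ K2 := by
    rw [hJ2, ← intervalIntegral.integral_const_mul]
    apply intervalIntegral.integral_mono_on h2t
      ((ha'sq (2*ε) t₀ h20 h2t le_rfl).const_mul _) hint2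
    intro t ht
    have := hwlow t ht
    nlinarith [sq_nonneg (a' t)]
  -- Cauchy–Schwarz estimates
  have hx : (a (2*ε) - a 0) ^ 2 ≤ 2 * ε * J1 := by
    have := cs_aux a' 0 (2*ε) h20 (ha'cont 0 (2*ε) le_rfl h20 h2t)
    rw [ftc 0 (2*ε) le_rfl h20 h2t] at this
    simpa using this
  have hJ2nn : 0 ≤ J2 := intervalIntegral.integral_nonneg h2t (fun t _ => sq_nonneg _)
  have hy : (a t₀ - a (2*ε)) ^ 2 ≤ ε * J2 := by
    have h := cs_aux a' (2*ε) t₀ h2t (ha'cont (2*ε) t₀ h20 h2t le_rfl)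
    rw [ftc (2*ε) t₀ h20 h2t le_rfl] at h
    have hlen : t₀ - 2*ε ≤ ε := by linarith
    nlinarith
  -- decay gives lower bound for total drop
  have hdrop : (a 0) ^ 2 ≤ 4 * (a t₀ - a 0) ^ 2 := by
    have h1 : |a 0| - |a t₀| ≤ |a t₀ - a 0| := by
      have := abs_sub_abs_le_abs_sub (a 0) (a t₀)
      rw [abs_sub_comm] at this
      linarith
    have h2 : (1/2) * |a 0| ≤ |a t₀ - a 0| := by linarith
    have h3 : (0:ℝ) ≤ |a 0| := abs_nonneg _
    nlinarith [sq_abs (a 0), sq_abs (a t₀ - a 0), sq_nonneg (|a t₀ - a 0| - (1/2)*|a 0|)]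
  -- combine
  rw [ge_iff_le, div_le_iff₀ (by linarith : (0:ℝ) < 16 * ε), hsplit]
  have hJ2K2 : J2 ≤ ε ^ 2 * K2 := by
    have hε2 : (0:ℝ) < ε ^ 2 := by positivity
    calc J2 = ε ^ 2 * ((ε ^ 2)⁻¹ * J2) := by field_simp
    _ ≤ ε ^ 2 * K2 := by nlinarith
  have hK2nn : 0 ≤ K2 := le_trans (by positivity) hK2ge
  set x := a (2*ε) - a 0
  set y := a t₀ - a (2*ε)
  have hxy : x + y = a t₀ - a 0 := by ring
  have hsum : (a 0) ^ 2 ≤ 8 * (x ^ 2 + y ^ 2) :=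
    sum_sq_aux x y (a 0) (by rw [hxy]; exact hdrop)
  have s1 : x ^ 2 ≤ 2 * ε * K1 :=
    le_trans hx (mul_le_mul_of_nonneg_left hK1ge (by positivity))
  have s2 : y ^ 2 ≤ 2 * ε * K2 :=
    le_trans hy (le_trans (mul_le_mul_of_nonneg_left hJ2K2 hε0.le)
      (cube_aux ε K2 hε0 hε1 hK2nn))
  linarith [s1, s2, hsum]
end

section
/- Let n ≥ 2 be an integer, let 0 < ε ≤ 1 and L ≥ 3ε, let λ ≥ 0, let a : ℝ → ℝ be continuously differentiable on [0, L], and let w : ℝ → ℝ be measurable with (a′(t)² + λ a(t)²)·w(t) integrable on [0, L], with w(t) ≥ 1 for all t ∈ [0, L] and w(t) ≥ ε^{−2(n−1)} for all t ∈ [2ε, 3ε]. Then ∫₀^L (a′(t)² + λ a(t)²) w(t) dt ≥ min(λ/4, 1/16) · a(0)²/ε. -/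
set_option maxHeartbeats 1600000 in
/-- Key per-mode estimate in the proof of Proposition 3.1: the weighted one-dimensional
energy of a Fourier mode is at least `min(λ/4, 1/16) · a(0)²/ε`. -/
theorem stmt_4 (n : ℕ) (hn : 2 ≤ n) (ε L : ℝ) (hε0 : 0 < ε) (hε1 : ε ≤ 1)
    (hL : 3 * ε ≤ L) (lam : ℝ) (hlam : 0 ≤ lam)
    (a a' : ℝ → ℝ)
    (hderiv : ∀ t ∈ Set.Icc (0 : ℝ) L, HasDerivWithinAt a (a' t) (Set.Icc 0 L) t)
    (hcont : ContinuousOn a' (Set.Icc 0 L))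
    (w : ℝ → ℝ) (hw : Measurable w)
    (hint : IntervalIntegrable (fun t => ((a' t) ^ 2 + lam * (a t) ^ 2) * w t)
      MeasureTheory.volume 0 L)
    (hw1 : ∀ t ∈ Set.Icc (0 : ℝ) L, 1 ≤ w t)
    (hwε : ∀ t ∈ Set.Icc (2 * ε) (3 * ε), (ε ^ (2 * (n - 1)))⁻¹ ≤ w t) :
    ∫ t in (0 : ℝ)..L, ((a' t) ^ 2 + lam * (a t) ^ 2) * w t ≥
      min (lam / 4) (1 / 16) * (a 0) ^ 2 / ε := by
  set f : ℝ → ℝ := fun t => ((a' t) ^ 2 + lam * (a t) ^ 2) * w t with hfdef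
  have hLpos : (0:ℝ) < L := by linarith
  have hfnn : ∀ t ∈ Set.Icc (0:ℝ) L, 0 ≤ f t := fun t ht =>
    mul_nonneg (add_nonneg (sq_nonneg _) (mul_nonneg hlam (sq_nonneg _)))
      (zero_le_one.trans (hw1 t ht))
  have hIsub : ∀ c d : ℝ, 0 ≤ c → c ≤ d → d ≤ L → IntervalIntegrable f MeasureTheory.volume c d := by
    intro c d h0c hcd hdL
    refine hint.mono_set ?_
    rw [Set.uIcc_of_le hLpos.le, Set.uIcc_of_le hcd]
    exact Set.Icc_subset_Icc h0c hdL
  -- the integral over any subinterval [c,d] ⊆ [0,L] is a lower bound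
  have hkey : ∀ c d : ℝ, 0 ≤ c → c ≤ d → d ≤ L →
      (∫ t in c..d, f t) ≤ ∫ t in (0:ℝ)..L, f t := by
    intro c d h0c hcd hdL
    have i1 := hIsub 0 c le_rfl h0c (by linarith)
    have i2 := hIsub c d h0c hcd hdL
    have i3 := hIsub d L (by linarith) hdL le_rfl
    have e1 := intervalIntegral.integral_add_adjacent_intervals i1 i2
    have e2 := intervalIntegral.integral_add_adjacent_intervals (i1.trans i2) i3
    have n1 : 0 ≤ ∫ t in (0:ℝ)..c, f t :=
      intervalIntegral.integral_nonneg h0c (fun u hu => hfnn u ⟨hu.1, by linarith [hu.2]⟩)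
    have n3 : 0 ≤ ∫ t in d..L, f t :=
      intervalIntegral.integral_nonneg hdL (fun u hu => hfnn u ⟨by linarith [hu.1], hu.2⟩)
    linarith
  have hmin16 : min (lam / 4) (1 / 16) ≤ 1 / 16 := min_le_right _ _
  have hminlam : min (lam / 4) (1 / 16) ≤ lam / 4 := min_le_left _ _
  have ha0sq : (0:ℝ) ≤ (a 0) ^ 2 := sq_nonneg _
  by_cases hcase : ∃ t ∈ Set.Icc (2*ε) (3*ε), |a t| ≤ |a 0| / 2
  · -- a decays by half at some t0; derivative term contributes
    obtain ⟨t0, ht0, hsmall⟩ := hcase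
    have ht0pos : 0 < t0 := lt_of_lt_of_le (by linarith) ht0.1
    have ht0L : t0 ≤ L := le_trans ht0.2 hL
    by_cases ha0 : a 0 = 0
    · have : 0 ≤ ∫ t in (0:ℝ)..L, f t :=
        intervalIntegral.integral_nonneg hLpos.le hfnn
      rw [ge_iff_le, ha0]
      simpa using this
    · have hA : 0 < |a 0| := abs_pos.mpr ha0
      set A := |a 0| with hAdef
      set s : ℝ := 2 * t0 / A with hsdef
      have hspos : 0 < s := div_pos (by linarith) hA
      -- FTC on [0, t0]
      have hconta : ContinuousOn a (Set.Icc 0 t0) := fun t ht =>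
        ((hderiv t ⟨ht.1, le_trans ht.2 ht0L⟩).continuousWithinAt).mono
          (Set.Icc_subset_Icc le_rfl ht0L)
      have hder' : ∀ x ∈ Set.Ioo (0:ℝ) t0, HasDerivWithinAt a (a' x) (Set.Ioi x) x := by
        intro x hx
        have hmem : Set.Icc (0:ℝ) L ∈ nhds x :=
          Icc_mem_nhds (by linarith [hx.1]) (by linarith [hx.2])
        exact ((hderiv x ⟨hx.1.le, by linarith [hx.2]⟩).hasDerivAt hmem).hasDerivWithinAt
      have ia' : IntervalIntegrable a' MeasureTheory.volume 0 t0 := by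
        apply ContinuousOn.intervalIntegrable
        rw [Set.uIcc_of_le ht0pos.le]
        exact hcont.mono (Set.Icc_subset_Icc le_rfl ht0L)
      have hFTC : ∫ t in (0:ℝ)..t0, a' t = a t0 - a 0 :=
        intervalIntegral.integral_eq_sub_of_hasDeriv_right_of_le ht0pos.le hconta hder' ia'
      have habs : A / 2 ≤ ∫ t in (0:ℝ)..t0, |a' t| := by
        have h1 : |a t0 - a 0| ≤ ∫ t in (0:ℝ)..t0, |a' t| := by
          rw [← hFTC]
          exact intervalIntegral.abs_integral_le_integral_abs ht0pos.le
        have h2 : A - |a t0| ≤ |a t0 - a 0| := by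
          have := abs_sub_abs_le_abs_sub (a 0) (a t0)
          rw [abs_sub_comm] at this
          linarith
        linarith
      -- pointwise lower bound by 2/s * |a'| - 1/s²
      have hpt : ∀ t ∈ Set.Icc (0:ℝ) t0, 2 / s * |a' t| - 1 / s ^ 2 ≤ f t := by
        intro t ht
        have htL : t ∈ Set.Icc (0:ℝ) L := ⟨ht.1, le_trans ht.2 ht0L⟩
        have hX : 0 ≤ (a' t) ^ 2 + lam * (a t) ^ 2 :=
          add_nonneg (sq_nonneg _) (mul_nonneg hlam (sq_nonneg _))
        have h1 : (a' t) ^ 2 + lam * (a t) ^ 2 ≤ f t := by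
          have := hw1 t htL
          calc (a' t) ^ 2 + lam * (a t) ^ 2
              = ((a' t) ^ 2 + lam * (a t) ^ 2) * 1 := by ring
            _ ≤ f t := mul_le_mul_of_nonneg_left this hX
        have h2 : 2 / s * |a' t| - 1 / s ^ 2 ≤ (a' t) ^ 2 := by
          have hsq := sq_nonneg (|a' t| - 1 / s)
          have habs2 : |a' t| ^ 2 = (a' t) ^ 2 := sq_abs _
          have expand : (|a' t| - 1 / s) ^ 2 = |a' t| ^ 2 - 2 / s * |a' t| + 1 / s ^ 2 := by
            ring
          linarith
        linarith [mul_nonneg hlam (sq_nonneg (a t))]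
      have ig : IntervalIntegrable (fun t => 2 / s * |a' t| - 1 / s ^ 2)
          MeasureTheory.volume 0 t0 := by
        exact ((ia'.abs.const_mul _).sub (intervalIntegrable_const))
      have hmono : (∫ t in (0:ℝ)..t0, (2 / s * |a' t| - 1 / s ^ 2)) ≤ ∫ t in (0:ℝ)..t0, f t :=
        intervalIntegral.integral_mono_on ht0pos.le ig (hIsub 0 t0 le_rfl ht0pos.le ht0L) hpt
      have hval : (∫ t in (0:ℝ)..t0, (2 / s * |a' t| - 1 / s ^ 2))
          = 2 / s * (∫ t in (0:ℝ)..t0, |a' t|) - t0 * (1 / s ^ 2) := by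
        rw [intervalIntegral.integral_sub ((ia'.abs).const_mul _) intervalIntegrable_const,
          intervalIntegral.integral_const_mul, intervalIntegral.integral_const, smul_eq_mul]
        ring
      have hlow : A ^ 2 / (4 * t0) ≤ ∫ t in (0:ℝ)..t0, f t := by
        have h3 : 2 / s * (A / 2) - t0 * (1 / s ^ 2)
            ≤ 2 / s * (∫ t in (0:ℝ)..t0, |a' t|) - t0 * (1 / s ^ 2) := by
          have h2s : (0:ℝ) ≤ 2 / s := by positivity
          have := mul_le_mul_of_nonneg_left habs h2s
          linarith
        have hAne : A ≠ 0 := hA.ne'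
        have ht0ne : t0 ≠ 0 := ht0pos.ne'
        have h4 : 2 / s * (A / 2) - t0 * (1 / s ^ 2) = A ^ 2 / (4 * t0) := by
          rw [hsdef]
          field_simp
          ring
        linarith
      have hfinal : min (lam / 4) (1 / 16) * (a 0) ^ 2 / ε ≤ A ^ 2 / (4 * t0) := by
        have hAa : A ^ 2 = (a 0) ^ 2 := sq_abs _
        rw [hAa, div_le_div_iff₀ hε0 (by linarith)]
        have ht03 : t0 ≤ 3 * ε := ht0.2
        nlinarith [mul_nonneg ha0sq ht0pos.le, mul_nonneg ha0sq hε0.le]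
      calc min (lam / 4) (1 / 16) * (a 0) ^ 2 / ε
          ≤ A ^ 2 / (4 * t0) := hfinal
        _ ≤ ∫ t in (0:ℝ)..t0, f t := hlow
        _ ≤ ∫ t in (0:ℝ)..L, f t := hkey 0 t0 le_rfl ht0pos.le ht0L
  · -- a stays at least half of a(0) on [2ε, 3ε]; the λ-term contributes
    push_neg at hcase
    set C : ℝ := lam / 4 * (a 0) ^ 2 * (ε ^ (2 * (n - 1)))⁻¹ with hCdef
    have hεpow : 0 < ε ^ (2 * (n - 1)) := pow_pos hε0 _
    have hbig : ∀ t ∈ Set.Icc (2*ε) (3*ε), C ≤ f t := by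
      intro t ht
      have htL : t ∈ Set.Icc (0:ℝ) L := ⟨by linarith [ht.1], by linarith [ht.2]⟩
      have hat : |a 0| / 2 < |a t| := hcase t ht
      have hat2 : (a 0) ^ 2 / 4 ≤ (a t) ^ 2 := by
        nlinarith [abs_nonneg (a 0), sq_abs (a t), sq_abs (a 0)]
      have hwt := hwε t ht
      have h1 : lam * (a t) ^ 2 * (ε ^ (2 * (n - 1)))⁻¹ ≤ f t := by
        have hX : lam * (a t) ^ 2 ≤ (a' t) ^ 2 + lam * (a t) ^ 2 := by
          nlinarith [sq_nonneg (a' t)]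
        have hXnn : 0 ≤ lam * (a t) ^ 2 := mul_nonneg hlam (sq_nonneg _)
        calc lam * (a t) ^ 2 * (ε ^ (2 * (n - 1)))⁻¹
            ≤ lam * (a t) ^ 2 * w t := mul_le_mul_of_nonneg_left hwt hXnn
          _ ≤ f t := mul_le_mul_of_nonneg_right hX (zero_le_one.trans (hw1 t htL))
      have h2 : C ≤ lam * (a t) ^ 2 * (ε ^ (2 * (n - 1)))⁻¹ := by
        rw [hCdef]
        have : lam / 4 * (a 0) ^ 2 ≤ lam * (a t) ^ 2 := by nlinarith
        exact mul_le_mul_of_nonneg_right this (by positivity)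
      linarith
    have hmono : (∫ t in (2*ε)..(3*ε), (C : ℝ)) ≤ ∫ t in (2*ε)..(3*ε), f t :=
      intervalIntegral.integral_mono_on (by linarith) intervalIntegrable_const
        (hIsub (2*ε) (3*ε) (by linarith) (by linarith) (by linarith)) hbig
    have hconstval : (∫ t in (2*ε)..(3*ε), (C : ℝ)) = ε * C := by
      rw [intervalIntegral.integral_const, smul_eq_mul]
      ring
    have hfinal : min (lam / 4) (1 / 16) * (a 0) ^ 2 / ε ≤ ε * C := by
      have hpow2 : ε ^ (2 * (n - 1)) ≤ ε ^ 2 :=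
        pow_le_pow_of_le_one hε0.le hε1 (by omega)
      have hinv : (ε ^ 2)⁻¹ ≤ (ε ^ (2 * (n - 1)))⁻¹ :=
        inv_anti₀ hεpow hpow2
      have hstep : ε⁻¹ ≤ ε * (ε ^ (2 * (n - 1)))⁻¹ := by
        have he : ε * (ε ^ 2)⁻¹ = ε⁻¹ := by
          field_simp
        have := mul_le_mul_of_nonneg_left hinv hε0.le
        linarith
      have hc1 : min (lam / 4) (1 / 16) * (a 0) ^ 2 / ε ≤ lam / 4 * (a 0) ^ 2 * ε⁻¹ := by
        rw [div_eq_mul_inv]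
        have : min (lam / 4) (1/16) * (a 0) ^ 2 ≤ lam / 4 * (a 0) ^ 2 :=
          mul_le_mul_of_nonneg_right hminlam ha0sq
        exact mul_le_mul_of_nonneg_right this (by positivity)
      have hc2 : lam / 4 * (a 0) ^ 2 * ε⁻¹ ≤ lam / 4 * (a 0) ^ 2 * (ε * (ε ^ (2 * (n - 1)))⁻¹) :=
        mul_le_mul_of_nonneg_left hstep (by positivity)
      rw [hCdef]
      calc min (lam / 4) (1 / 16) * (a 0) ^ 2 / ε
          ≤ lam / 4 * (a 0) ^ 2 * (ε * (ε ^ (2 * (n - 1)))⁻¹) := le_trans hc1 hc2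
        _ = ε * (lam / 4 * (a 0) ^ 2 * (ε ^ (2 * (n - 1)))⁻¹) := by ring
    calc min (lam / 4) (1 / 16) * (a 0) ^ 2 / ε
        ≤ ε * C := hfinal
      _ = ∫ t in (2*ε)..(3*ε), (C : ℝ) := hconstval.symm
      _ ≤ ∫ t in (2*ε)..(3*ε), f t := hmono
      _ ≤ ∫ t in (0:ℝ)..L, f t := hkey (2*ε) (3*ε) (by linarith) (by linarith) (by linarith)
end

section
/- Let n ≥ 3 be an integer, L > 0, 0 < ε < (1/4)·min(L, 1/L), and λ ≥ 0. Let a : ℝ → ℝ be continuously differentiable on [−L, L], and let w : ℝ → ℝ be measurable with (a′(t)² w(t)ⁿ + λ a(t)² w(t)^{n−2}) integrable on [−L, L], with w(t) ≥ 1 for all t ∈ [−L, L], and w(t) ≥ ε^{−2} for all t ∈ [−L+2ε, −L+3ε] and all t ∈ [L−3ε, L−2ε]. Then ∫_{−L}^{L} (a′(t)² w(t)ⁿ + λ a(t)² w(t)^{n−2}) dt ≥ (min(λ/4, 1/12)/ε) · (a(−L)² + a(L)²). -/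
open MeasureTheory Set

lemma quad_lower (a a' : ℝ → ℝ) (u v : ℝ) (huv : u ≤ v)
    (hderiv : ∀ t ∈ Set.Icc u v, HasDerivWithinAt a (a' t) (Set.Icc u v) t)
    (hcont : ContinuousOn a' (Set.Icc u v)) :
    (a v - a u) ^ 2 ≤ (v - u) * ∫ s in u..v, (a' s) ^ 2 := by
  rcases eq_or_lt_of_le huv with rfl | hlt
  · simp
  have huIcc : Set.uIcc u v = Set.Icc u v := Set.uIcc_of_le huv
  set k := (a v - a u) / (v - u) with hkdef
  have hcont' : ContinuousOn a' (Set.uIcc u v) := by rw [huIcc]; exact hcont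
  have hint1 : IntervalIntegrable a' volume u v := hcont'.intervalIntegrable
  have hint2 : IntervalIntegrable (fun s => (a' s) ^ 2) volume u v :=
    (hcont'.pow 2).intervalIntegrable
  have hconta : ContinuousOn a (Set.Icc u v) := fun t ht => (hderiv t ht).continuousWithinAt
  have hderiv' : ∀ x ∈ Set.Ioo u v, HasDerivAt a (a' x) x := fun x hx =>
    (hderiv x (Set.Ioo_subset_Icc_self hx)).hasDerivAt (Icc_mem_nhds hx.1 hx.2)
  have hftc : ∫ s in u..v, a' s = a v - a u :=
    intervalIntegral.integral_eq_sub_of_hasDerivAt_of_le huv hconta hderiv' hint1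
  have hnn : 0 ≤ ∫ s in u..v, (a' s - k) ^ 2 :=
    intervalIntegral.integral_nonneg huv (fun s _ => sq_nonneg _)
  have hexp : ∫ s in u..v, (a' s - k) ^ 2
      = (∫ s in u..v, (a' s) ^ 2) - 2 * k * (a v - a u) + (v - u) * k ^ 2 := by
    have heq : ∀ s : ℝ, (a' s - k) ^ 2 = (a' s) ^ 2 - (2 * k) * a' s + k ^ 2 := by
      intro s; ring
    simp_rw [heq]
    rw [intervalIntegral.integral_add (hint2.sub (hint1.const_mul _)) intervalIntegrable_const,
      intervalIntegral.integral_sub hint2 (hint1.const_mul _),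
      intervalIntegral.integral_const_mul, hftc, intervalIntegral.integral_const, smul_eq_mul]
    try ring
  have hk : k * (v - u) = a v - a u := div_mul_cancel₀ _ (by linarith : v - u ≠ 0)
  have h : 0 ≤ (∫ s in u..v, (a' s) ^ 2) - 2 * k * (a v - a u) + (v - u) * k ^ 2 :=
    hexp ▸ hnn
  have hD : a v - a u = k * (v - u) := hk.symm
  rw [hD] at h ⊢
  nlinarith [h, sub_pos.mpr hlt, sq_nonneg k,
    mul_le_mul_of_nonneg_left h (le_of_lt (sub_pos.mpr hlt))]

lemma key_left (n : ℕ) (hn : 3 ≤ n) (lam : ℝ) (hlam : 0 ≤ lam)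
    (ε : ℝ) (hε0 : 0 < ε)
    (c : ℝ) (a a' w : ℝ → ℝ)
    (hderiv : ∀ t ∈ Set.Icc c (c + 3 * ε), HasDerivWithinAt a (a' t) (Set.Icc c (c + 3 * ε)) t)
    (hcont : ContinuousOn a' (Set.Icc c (c + 3 * ε)))
    (hint : IntervalIntegrable
      (fun t => (a' t) ^ 2 * (w t) ^ n + lam * (a t) ^ 2 * (w t) ^ (n - 2))
      volume c (c + 3 * ε))
    (hw1 : ∀ t ∈ Set.Icc c (c + 3 * ε), 1 ≤ w t)
    (hwε : ∀ t ∈ Set.Icc (c + 2 * ε) (c + 3 * ε), ε⁻¹ ^ 2 ≤ w t) :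
    min (lam / 4) (1 / 12) / ε * (a c) ^ 2 ≤
      ∫ t in c..(c + 3 * ε), ((a' t) ^ 2 * (w t) ^ n + lam * (a t) ^ 2 * (w t) ^ (n - 2)) := by
  set F : ℝ → ℝ := fun t => (a' t) ^ 2 * (w t) ^ n + lam * (a t) ^ 2 * (w t) ^ (n - 2) with hF
  have hce : c ≤ c + 3 * ε := by linarith
  have hFnn : ∀ t ∈ Set.Icc c (c + 3 * ε), 0 ≤ F t := by
    intro t ht
    have hwt := hw1 t ht
    have h0 : (0:ℝ) ≤ w t := by linarith
    exact add_nonneg (mul_nonneg (sq_nonneg _) (pow_nonneg h0 _))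
      (mul_nonneg (mul_nonneg hlam (sq_nonneg _)) (pow_nonneg h0 _))
  have hFd : ∀ t ∈ Set.Icc c (c + 3 * ε), (a' t) ^ 2 ≤ F t := by
    intro t ht
    have hwt := hw1 t ht
    have h0 : (0:ℝ) ≤ w t := by linarith
    have h1 : (1:ℝ) ≤ (w t) ^ n := one_le_pow₀ hwt
    have h2 : (a' t) ^ 2 * 1 ≤ (a' t) ^ 2 * (w t) ^ n :=
      mul_le_mul_of_nonneg_left h1 (sq_nonneg _)
    have h3 : 0 ≤ lam * (a t) ^ 2 * (w t) ^ (n - 2) :=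
      mul_nonneg (mul_nonneg hlam (sq_nonneg _)) (pow_nonneg h0 _)
    simp only [hF]; nlinarith
  by_cases h : ∃ t ∈ Set.Icc (c + 2 * ε) (c + 3 * ε), |a c| / 2 ≤ |a t - a c|
  · obtain ⟨t, ht, hta⟩ := h
    have hct : c ≤ t := by have := ht.1; linarith
    have htd : t ≤ c + 3 * ε := ht.2
    have hsub : Set.Icc c t ⊆ Set.Icc c (c + 3 * ε) := Set.Icc_subset_Icc le_rfl htd
    have hsubu : Set.uIcc c t ⊆ Set.uIcc c (c + 3 * ε) := by
      rw [Set.uIcc_of_le hct, Set.uIcc_of_le hce]; exact hsub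
    have hq : (a t - a c) ^ 2 ≤ (t - c) * ∫ s in c..t, (a' s) ^ 2 :=
      quad_lower a a' c t hct (fun s hs => (hderiv s (hsub hs)).mono hsub) (hcont.mono hsub)
    have hconts : ContinuousOn (fun s => (a' s) ^ 2) (Set.uIcc c t) := by
      rw [Set.uIcc_of_le hct]; exact (hcont.mono hsub).pow 2
    have hI2 : (∫ s in c..t, (a' s) ^ 2) ≤ ∫ s in c..t, F s :=
      intervalIntegral.integral_mono_on hct hconts.intervalIntegrable
        (hint.mono_set hsubu) (fun s hs => hFd s (hsub hs))
    have hsubu2 : Set.uIcc t (c + 3 * ε) ⊆ Set.uIcc c (c + 3 * ε) := by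
      rw [Set.uIcc_of_le htd, Set.uIcc_of_le hce]
      exact Set.Icc_subset_Icc hct le_rfl
    have hadd := intervalIntegral.integral_add_adjacent_intervals
      (hint.mono_set hsubu) (hint.mono_set hsubu2)
    have htail : 0 ≤ ∫ s in t..(c + 3 * ε), F s :=
      intervalIntegral.integral_nonneg htd
        (fun s hs => hFnn s ⟨le_trans hct hs.1, hs.2⟩)
    have hI3 : (∫ s in c..t, F s) ≤ ∫ s in c..(c + 3 * ε), F s := by linarith
    have hInn : 0 ≤ ∫ s in c..t, (a' s) ^ 2 :=
      intervalIntegral.integral_nonneg hct (fun s _ => sq_nonneg _)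
    have hA : (a c) ^ 2 / 4 ≤ (a t - a c) ^ 2 := by
      have h2 := mul_self_le_mul_self (by positivity) hta
      have := sq_abs (a t - a c); have := sq_abs (a c); nlinarith
    have h12 : (a c) ^ 2 ≤ 12 * ε * (∫ s in c..t, (a' s) ^ 2) := by
      have hlen : t - c ≤ 3 * ε := by linarith
      nlinarith [mul_le_mul_of_nonneg_right hlen hInn]
    have hmin : min (lam / 4) (1 / 12) ≤ 1 / 12 := min_le_right _ _
    have step : min (lam / 4) (1 / 12) / ε * (a c) ^ 2 ≤ ∫ s in c..t, (a' s) ^ 2 := by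
      rw [div_mul_eq_mul_div, div_le_iff₀ hε0]
      nlinarith [mul_le_mul_of_nonneg_right hmin (sq_nonneg (a c))]
    calc min (lam / 4) (1 / 12) / ε * (a c) ^ 2 ≤ ∫ s in c..t, (a' s) ^ 2 := step
      _ ≤ ∫ s in c..t, F s := hI2
      _ ≤ ∫ s in c..(c + 3 * ε), F s := hI3
  · push_neg at h
    have hstripsub : Set.Icc (c + 2 * ε) (c + 3 * ε) ⊆ Set.Icc c (c + 3 * ε) :=
      Set.Icc_subset_Icc (by linarith) le_rfl
    have hpt : ∀ t ∈ Set.Icc (c + 2 * ε) (c + 3 * ε),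
        lam * (a c) ^ 2 / 4 * ε⁻¹ ^ 2 ≤ F t := by
      intro t ht
      have h1 := h t ht
      have h2 : |a c| / 2 ≤ |a t| := by
        have h3 := abs_sub_abs_le_abs_sub (a c) (a t)
        rw [abs_sub_comm] at h3; linarith
      have ha2 : (a c) ^ 2 / 4 ≤ (a t) ^ 2 := by
        have h4 := mul_self_le_mul_self (by positivity) h2
        have := sq_abs (a t); have := sq_abs (a c); nlinarith
      have htin := hstripsub ht
      have hwt := hw1 t htin
      have hwe := hwε t ht
      have hwn2 : ε⁻¹ ^ 2 ≤ (w t) ^ (n - 2) :=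
        le_trans hwe (le_self_pow₀ hwt (by omega))
      have key : lam * (a c) ^ 2 / 4 * ε⁻¹ ^ 2 ≤ lam * (a t) ^ 2 * (w t) ^ (n - 2) := by
        have e1 : lam * (a c) ^ 2 / 4 * ε⁻¹ ^ 2 = (lam * ((a c) ^ 2 / 4)) * ε⁻¹ ^ 2 := by ring
        rw [e1]
        apply mul_le_mul (by nlinarith) hwn2 (by positivity)
          (mul_nonneg hlam (sq_nonneg _))
      have h5 : 0 ≤ (a' t) ^ 2 * (w t) ^ n :=
        mul_nonneg (sq_nonneg _) (pow_nonneg (by linarith) _)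
      simp only [hF]; linarith
    have hsubu1 : Set.uIcc c (c + 2 * ε) ⊆ Set.uIcc c (c + 3 * ε) := by
      rw [Set.uIcc_of_le (by linarith), Set.uIcc_of_le hce]
      exact Set.Icc_subset_Icc le_rfl (by linarith)
    have hsubu2 : Set.uIcc (c + 2 * ε) (c + 3 * ε) ⊆ Set.uIcc c (c + 3 * ε) := by
      rw [Set.uIcc_of_le (by linarith), Set.uIcc_of_le hce]; exact hstripsub
    have hstrip : lam * (a c) ^ 2 / 4 * ε⁻¹ ^ 2 * ε ≤
        ∫ t in (c + 2 * ε)..(c + 3 * ε), F t := by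
      have hm := intervalIntegral.integral_mono_on (by linarith : c + 2 * ε ≤ c + 3 * ε)
        (intervalIntegrable_const) (hint.mono_set hsubu2) hpt
      rw [intervalIntegral.integral_const, smul_eq_mul] at hm
      nlinarith [hm]
    have hadd := intervalIntegral.integral_add_adjacent_intervals
      (hint.mono_set hsubu1) (hint.mono_set hsubu2)
    have hhead : 0 ≤ ∫ t in c..(c + 2 * ε), F t :=
      intervalIntegral.integral_nonneg (by linarith)
        (fun s hs => hFnn s ⟨hs.1, by linarith [hs.2]⟩)
    have hmin : min (lam / 4) (1 / 12) ≤ lam / 4 := min_le_left _ _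
    have heq : lam * (a c) ^ 2 / 4 * ε⁻¹ ^ 2 * ε = lam / 4 / ε * (a c) ^ 2 := by
      field_simp
    have hfin : min (lam / 4) (1 / 12) / ε * (a c) ^ 2 ≤ lam / 4 / ε * (a c) ^ 2 := by
      gcongr
    linarith [heq ▸ hstrip]

lemma key_right (n : ℕ) (hn : 3 ≤ n) (lam : ℝ) (hlam : 0 ≤ lam)
    (ε : ℝ) (hε0 : 0 < ε)
    (d : ℝ) (a a' w : ℝ → ℝ)
    (hderiv : ∀ t ∈ Set.Icc (d - 3 * ε) d, HasDerivWithinAt a (a' t) (Set.Icc (d - 3 * ε) d) t)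
    (hcont : ContinuousOn a' (Set.Icc (d - 3 * ε) d))
    (hint : IntervalIntegrable
      (fun t => (a' t) ^ 2 * (w t) ^ n + lam * (a t) ^ 2 * (w t) ^ (n - 2))
      volume (d - 3 * ε) d)
    (hw1 : ∀ t ∈ Set.Icc (d - 3 * ε) d, 1 ≤ w t)
    (hwε : ∀ t ∈ Set.Icc (d - 3 * ε) (d - 2 * ε), ε⁻¹ ^ 2 ≤ w t) :
    min (lam / 4) (1 / 12) / ε * (a d) ^ 2 ≤
      ∫ t in (d - 3 * ε)..d, ((a' t) ^ 2 * (w t) ^ n + lam * (a t) ^ 2 * (w t) ^ (n - 2)) := by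
  set F : ℝ → ℝ := fun t => (a' t) ^ 2 * (w t) ^ n + lam * (a t) ^ 2 * (w t) ^ (n - 2) with hF
  have hce : d - 3 * ε ≤ d := by linarith
  have hFnn : ∀ t ∈ Set.Icc (d - 3 * ε) d, 0 ≤ F t := by
    intro t ht
    have hwt := hw1 t ht
    have h0 : (0:ℝ) ≤ w t := by linarith
    exact add_nonneg (mul_nonneg (sq_nonneg _) (pow_nonneg h0 _))
      (mul_nonneg (mul_nonneg hlam (sq_nonneg _)) (pow_nonneg h0 _))
  have hFd : ∀ t ∈ Set.Icc (d - 3 * ε) d, (a' t) ^ 2 ≤ F t := by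
    intro t ht
    have hwt := hw1 t ht
    have h0 : (0:ℝ) ≤ w t := by linarith
    have h1 : (1:ℝ) ≤ (w t) ^ n := one_le_pow₀ hwt
    have h2 : (a' t) ^ 2 * 1 ≤ (a' t) ^ 2 * (w t) ^ n :=
      mul_le_mul_of_nonneg_left h1 (sq_nonneg _)
    have h3 : 0 ≤ lam * (a t) ^ 2 * (w t) ^ (n - 2) :=
      mul_nonneg (mul_nonneg hlam (sq_nonneg _)) (pow_nonneg h0 _)
    simp only [hF]; nlinarith
  by_cases h : ∃ t ∈ Set.Icc (d - 3 * ε) (d - 2 * ε), |a d| / 2 ≤ |a t - a d|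
  · obtain ⟨t, ht, hta⟩ := h
    have hct : t ≤ d := by have := ht.2; linarith
    have htd : d - 3 * ε ≤ t := ht.1
    have hsub : Set.Icc t d ⊆ Set.Icc (d - 3 * ε) d := Set.Icc_subset_Icc htd le_rfl
    have hsubu : Set.uIcc t d ⊆ Set.uIcc (d - 3 * ε) d := by
      rw [Set.uIcc_of_le hct, Set.uIcc_of_le hce]; exact hsub
    have hq : (a d - a t) ^ 2 ≤ (d - t) * ∫ s in t..d, (a' s) ^ 2 :=
      quad_lower a a' t d hct (fun s hs => (hderiv s (hsub hs)).mono hsub) (hcont.mono hsub)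
    have hconts : ContinuousOn (fun s => (a' s) ^ 2) (Set.uIcc t d) := by
      rw [Set.uIcc_of_le hct]; exact (hcont.mono hsub).pow 2
    have hI2 : (∫ s in t..d, (a' s) ^ 2) ≤ ∫ s in t..d, F s :=
      intervalIntegral.integral_mono_on hct hconts.intervalIntegrable
        (hint.mono_set hsubu) (fun s hs => hFd s (hsub hs))
    have hsubu2 : Set.uIcc (d - 3 * ε) t ⊆ Set.uIcc (d - 3 * ε) d := by
      rw [Set.uIcc_of_le htd, Set.uIcc_of_le hce]
      exact Set.Icc_subset_Icc le_rfl hct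
    have hadd := intervalIntegral.integral_add_adjacent_intervals
      (hint.mono_set hsubu2) (hint.mono_set hsubu)
    have htail : 0 ≤ ∫ s in (d - 3 * ε)..t, F s :=
      intervalIntegral.integral_nonneg htd
        (fun s hs => hFnn s ⟨hs.1, le_trans hs.2 hct⟩)
    have hI3 : (∫ s in t..d, F s) ≤ ∫ s in (d - 3 * ε)..d, F s := by linarith
    have hInn : 0 ≤ ∫ s in t..d, (a' s) ^ 2 :=
      intervalIntegral.integral_nonneg hct (fun s _ => sq_nonneg _)
    have hA : (a d) ^ 2 / 4 ≤ (a d - a t) ^ 2 := by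
      have h2 := mul_self_le_mul_self (by positivity) hta
      have e1 := sq_abs (a t - a d); have e2 := sq_abs (a d); nlinarith
    have h12 : (a d) ^ 2 ≤ 12 * ε * (∫ s in t..d, (a' s) ^ 2) := by
      have hlen : d - t ≤ 3 * ε := by linarith
      nlinarith [mul_le_mul_of_nonneg_right hlen hInn]
    have hmin : min (lam / 4) (1 / 12) ≤ 1 / 12 := min_le_right _ _
    have step : min (lam / 4) (1 / 12) / ε * (a d) ^ 2 ≤ ∫ s in t..d, (a' s) ^ 2 := by
      rw [div_mul_eq_mul_div, div_le_iff₀ hε0]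
      nlinarith [mul_le_mul_of_nonneg_right hmin (sq_nonneg (a d))]
    calc min (lam / 4) (1 / 12) / ε * (a d) ^ 2 ≤ ∫ s in t..d, (a' s) ^ 2 := step
      _ ≤ ∫ s in t..d, F s := hI2
      _ ≤ ∫ s in (d - 3 * ε)..d, F s := hI3
  · push_neg at h
    have hstripsub : Set.Icc (d - 3 * ε) (d - 2 * ε) ⊆ Set.Icc (d - 3 * ε) d :=
      Set.Icc_subset_Icc le_rfl (by linarith)
    have hpt : ∀ t ∈ Set.Icc (d - 3 * ε) (d - 2 * ε),
        lam * (a d) ^ 2 / 4 * ε⁻¹ ^ 2 ≤ F t := by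
      intro t ht
      have h1 := h t ht
      have h2 : |a d| / 2 ≤ |a t| := by
        have h3 := abs_sub_abs_le_abs_sub (a d) (a t)
        rw [abs_sub_comm] at h3; linarith
      have ha2 : (a d) ^ 2 / 4 ≤ (a t) ^ 2 := by
        have h4 := mul_self_le_mul_self (by positivity) h2
        have e1 := sq_abs (a t); have e2 := sq_abs (a d); nlinarith
      have htin := hstripsub ht
      have hwt := hw1 t htin
      have hwe := hwε t ht
      have hwn2 : ε⁻¹ ^ 2 ≤ (w t) ^ (n - 2) :=
        le_trans hwe (le_self_pow₀ hwt (by omega))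
      have key : lam * (a d) ^ 2 / 4 * ε⁻¹ ^ 2 ≤ lam * (a t) ^ 2 * (w t) ^ (n - 2) := by
        have e1 : lam * (a d) ^ 2 / 4 * ε⁻¹ ^ 2 = (lam * ((a d) ^ 2 / 4)) * ε⁻¹ ^ 2 := by ring
        rw [e1]
        apply mul_le_mul (by nlinarith) hwn2 (by positivity)
          (mul_nonneg hlam (sq_nonneg _))
      have h5 : 0 ≤ (a' t) ^ 2 * (w t) ^ n :=
        mul_nonneg (sq_nonneg _) (pow_nonneg (by linarith) _)
      simp only [hF]; linarith
    have hsubu1 : Set.uIcc (d - 2 * ε) d ⊆ Set.uIcc (d - 3 * ε) d := by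
      rw [Set.uIcc_of_le (by linarith), Set.uIcc_of_le hce]
      exact Set.Icc_subset_Icc (by linarith) le_rfl
    have hsubu2 : Set.uIcc (d - 3 * ε) (d - 2 * ε) ⊆ Set.uIcc (d - 3 * ε) d := by
      rw [Set.uIcc_of_le (by linarith), Set.uIcc_of_le hce]; exact hstripsub
    have hstrip : lam * (a d) ^ 2 / 4 * ε⁻¹ ^ 2 * ε ≤
        ∫ t in (d - 3 * ε)..(d - 2 * ε), F t := by
      have hm := intervalIntegral.integral_mono_on (by linarith : d - 3 * ε ≤ d - 2 * ε)
        (intervalIntegrable_const) (hint.mono_set hsubu2) hpt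
      rw [intervalIntegral.integral_const, smul_eq_mul] at hm
      nlinarith [hm]
    have hadd := intervalIntegral.integral_add_adjacent_intervals
      (hint.mono_set hsubu2) (hint.mono_set hsubu1)
    have hhead : 0 ≤ ∫ t in (d - 2 * ε)..d, F t :=
      intervalIntegral.integral_nonneg (by linarith)
        (fun s hs => hFnn s ⟨by linarith [hs.1], hs.2⟩)
    have hmin : min (lam / 4) (1 / 12) ≤ lam / 4 := min_le_left _ _
    have heq : lam * (a d) ^ 2 / 4 * ε⁻¹ ^ 2 * ε = lam / 4 / ε * (a d) ^ 2 := by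
      field_simp
    have hfin : min (lam / 4) (1 / 12) / ε * (a d) ^ 2 ≤ lam / 4 / ε * (a d) ^ 2 := by
      gcongr
    linarith [heq ▸ hstrip]



/-- Step 1 (inequality (cyl7)) in the proof of Theorem 3.8: the per-mode energy on the
cylinder `Σ×[−L,L]` is at least `min(λ/4, 1/12)·(a(−L)² + a(L)²)/ε`. -/
theorem stmt_6 (n : ℕ) (hn : 3 ≤ n) (L : ℝ) (hL : 0 < L)
    (ε : ℝ) (hε0 : 0 < ε) (hε : ε < (1 / 4) * min L (1 / L))
    (lam : ℝ) (hlam : 0 ≤ lam)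
    (a a' : ℝ → ℝ)
    (hderiv : ∀ t ∈ Set.Icc (-L) L, HasDerivWithinAt a (a' t) (Set.Icc (-L) L) t)
    (hcont : ContinuousOn a' (Set.Icc (-L) L))
    (w : ℝ → ℝ) (hw : Measurable w)
    (hint : IntervalIntegrable
      (fun t => (a' t) ^ 2 * (w t) ^ n + lam * (a t) ^ 2 * (w t) ^ (n - 2))
      MeasureTheory.volume (-L) L)
    (hw1 : ∀ t ∈ Set.Icc (-L) L, 1 ≤ w t)
    (hwε₁ : ∀ t ∈ Set.Icc (-L + 2 * ε) (-L + 3 * ε), ε⁻¹ ^ 2 ≤ w t)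
    (hwε₂ : ∀ t ∈ Set.Icc (L - 3 * ε) (L - 2 * ε), ε⁻¹ ^ 2 ≤ w t) :
    ∫ t in (-L)..L, ((a' t) ^ 2 * (w t) ^ n + lam * (a t) ^ 2 * (w t) ^ (n - 2)) ≥
      (min (lam / 4) (1 / 12) / ε) * ((a (-L)) ^ 2 + (a L) ^ 2) := by
  set F : ℝ → ℝ := fun t => (a' t) ^ 2 * (w t) ^ n + lam * (a t) ^ 2 * (w t) ^ (n - 2) with hF
  have hεL : ε < L / 4 := by
    have : min L (1 / L) ≤ L := min_le_left _ _
    linarith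
  have h3ε : 3 * ε < L := by linarith
  have hord1 : -L ≤ -L + 3 * ε := by linarith
  have hord2 : -L + 3 * ε ≤ L - 3 * ε := by linarith
  have hord3 : L - 3 * ε ≤ L := by linarith
  have hsub1 : Set.Icc (-L) (-L + 3 * ε) ⊆ Set.Icc (-L) L :=
    Set.Icc_subset_Icc le_rfl (by linarith)
  have hsub2 : Set.Icc (L - 3 * ε) L ⊆ Set.Icc (-L) L :=
    Set.Icc_subset_Icc (by linarith) le_rfl
  have huL : Set.uIcc (-L) L = Set.Icc (-L) L := Set.uIcc_of_le (by linarith)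
  have hu1 : Set.uIcc (-L) (-L + 3 * ε) ⊆ Set.uIcc (-L) L := by
    rw [Set.uIcc_of_le hord1, huL]; exact hsub1
  have hu2 : Set.uIcc (-L + 3 * ε) (L - 3 * ε) ⊆ Set.uIcc (-L) L := by
    rw [Set.uIcc_of_le hord2, huL]; exact Set.Icc_subset_Icc (by linarith) (by linarith)
  have hu3 : Set.uIcc (L - 3 * ε) L ⊆ Set.uIcc (-L) L := by
    rw [Set.uIcc_of_le hord3, huL]; exact hsub2
  have hu12 : Set.uIcc (-L) (L - 3 * ε) ⊆ Set.uIcc (-L) L := by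
    rw [Set.uIcc_of_le (by linarith : -L ≤ L - 3 * ε), huL]
    exact Set.Icc_subset_Icc le_rfl (by linarith)
  have i1 : IntervalIntegrable F volume (-L) (-L + 3 * ε) := hint.mono_set hu1
  have i2 : IntervalIntegrable F volume (-L + 3 * ε) (L - 3 * ε) := hint.mono_set hu2
  have i3 : IntervalIntegrable F volume (L - 3 * ε) L := hint.mono_set hu3
  have i12 : IntervalIntegrable F volume (-L) (L - 3 * ε) := hint.mono_set hu12
  have hsplit1 := intervalIntegral.integral_add_adjacent_intervals i1 i2
  have hsplit2 := intervalIntegral.integral_add_adjacent_intervals i12 i3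
  have hleft : min (lam / 4) (1 / 12) / ε * (a (-L)) ^ 2 ≤
      ∫ t in (-L)..(-L + 3 * ε), F t :=
    key_left n hn lam hlam ε hε0 (-L) a a' w
      (fun t ht => (hderiv t (hsub1 ht)).mono hsub1)
      (hcont.mono hsub1) i1 (fun t ht => hw1 t (hsub1 ht)) hwε₁
  have hright : min (lam / 4) (1 / 12) / ε * (a L) ^ 2 ≤
      ∫ t in (L - 3 * ε)..L, F t :=
    key_right n hn lam hlam ε hε0 L a a' w
      (fun t ht => (hderiv t (hsub2 ht)).mono hsub2)
      (hcont.mono hsub2) i3 (fun t ht => hw1 t (hsub2 ht)) hwε₂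
  have hmid : 0 ≤ ∫ t in (-L + 3 * ε)..(L - 3 * ε), F t := by
    apply intervalIntegral.integral_nonneg hord2
    intro t ht
    have htin : t ∈ Set.Icc (-L) L := ⟨by linarith [ht.1], by linarith [ht.2]⟩
    have hwt := hw1 t htin
    have h0 : (0:ℝ) ≤ w t := by linarith
    exact add_nonneg (mul_nonneg (sq_nonneg _) (pow_nonneg h0 _))
      (mul_nonneg (mul_nonneg hlam (sq_nonneg _)) (pow_nonneg h0 _))
  rw [ge_iff_le, mul_add]
  linarith
end

section
/- Let n ≥ 1 be an integer, L > 0, and 0 < ε < (1/4)·min(L, 1/L). Let a : ℝ → ℝ be continuously differentiable on [−L, L] with a(−L) + a(L) = 0, and let w : ℝ → ℝ be measurable with a′(t)²·w(t)ⁿ integrable on [−L, L], with w(t) ≥ 1 for all t ∈ [−L, L] and w(t) ≥ ε^{−2} for all t ∈ [−L+2ε, L−2ε]. Then ∫_{−L}^{L} a′(t)² w(t)ⁿ dt ≥ (a(−L)² + a(L)²)/(24ε). -/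
open MeasureTheory Set

lemma cs_interval (f : ℝ → ℝ) (c d : ℝ) (hcd : c ≤ d) (hf : ContinuousOn f (Set.Icc c d)) :
    (∫ t in c..d, f t) ^ 2 ≤ (d - c) * ∫ t in c..d, (f t) ^ 2 := by
  set μ := volume.restrict (Set.Ioc c d) with hμ
  have hfi : IntegrableOn f (Set.Ioc c d) := (hf.intervalIntegrable_of_Icc hcd).1
  have hf2i : IntegrableOn (fun t => f t ^ 2) (Set.Ioc c d) :=
    ((hf.pow 2).intervalIntegrable_of_Icc hcd).1
  have hpq : Real.HolderConjugate 2 2 := Real.holderConjugate_iff.mpr ⟨one_lt_two, by norm_num⟩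
  have hmemf : MemLp (fun t => |f t|) (ENNReal.ofReal 2) μ := by
    have : MemLp f 2 μ :=
      (memLp_two_iff_integrable_sq hfi.aestronglyMeasurable).2 (by exact hf2i)
    have habs := this.abs
    rw [ENNReal.ofReal_ofNat]; exact habs
  have hmem1 : MemLp (fun _ : ℝ => (1 : ℝ)) (ENNReal.ofReal 2) μ := memLp_const 1
  have hold := integral_mul_le_Lp_mul_Lq_of_nonneg hpq
    (f := fun t => |f t|) (g := fun _ => (1 : ℝ)) (μ := μ)
    (Filter.Eventually.of_forall fun t => abs_nonneg _)
    (Filter.Eventually.of_forall fun t => zero_le_one) hmemf hmem1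
  have hX : (∫ t, |f t| ^ (2:ℝ) ∂μ) = ∫ t in c..d, f t ^ 2 := by
    rw [intervalIntegral.integral_of_le hcd]
    refine integral_congr_ae (Filter.Eventually.of_forall fun t => ?_)
    show |f t| ^ (2:ℝ) = f t ^ 2
    rw [show (2:ℝ) = ((2:ℕ):ℝ) by norm_num, Real.rpow_natCast, sq_abs]
  have hY : (∫ _t, (1:ℝ) ^ (2:ℝ) ∂μ) = d - c := by
    simp [hμ, Real.volume_Ioc, ENNReal.toReal_ofReal (sub_nonneg.2 hcd), hcd]
  have hL : |∫ t in c..d, f t| ≤ ∫ t, |f t| * 1 ∂μ := by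
    have h := intervalIntegral.abs_integral_le_integral_abs (f := f) (μ := volume) hcd
    calc |∫ t in c..d, f t| ≤ ∫ t in c..d, |f t| := h
      _ = ∫ t, |f t| * 1 ∂μ := by rw [intervalIntegral.integral_of_le hcd]; simp [hμ]
  rw [hX, hY] at hold
  have hXnn : (0:ℝ) ≤ ∫ t in c..d, f t ^ 2 := by
    rw [intervalIntegral.integral_of_le hcd]
    exact integral_nonneg fun t => sq_nonneg _
  have hYnn : (0:ℝ) ≤ d - c := sub_nonneg.2 hcd
  have h1 : |∫ t in c..d, f t| ≤ (∫ t in c..d, f t ^ 2) ^ (1/2:ℝ) * (d - c) ^ (1/2:ℝ) :=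
    hL.trans hold
  have h2 := pow_le_pow_left₀ (abs_nonneg _) h1 2
  calc (∫ t in c..d, f t) ^ 2 = |∫ t in c..d, f t| ^ 2 := (sq_abs _).symm
    _ ≤ ((∫ t in c..d, f t ^ 2) ^ (1/2:ℝ) * (d - c) ^ (1/2:ℝ)) ^ 2 := h2
    _ = (d - c) * ∫ t in c..d, f t ^ 2 := by
        rw [mul_pow, ← Real.rpow_natCast ((∫ t in c..d, f t ^ 2) ^ (1/2:ℝ)) 2,
          ← Real.rpow_natCast ((d - c) ^ (1/2:ℝ)) 2,
          ← Real.rpow_mul hXnn, ← Real.rpow_mul hYnn]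
        norm_num [mul_comm]

lemma quad_aux (A u v : ℝ) (hu : u ^ 2 < A ^ 2 / 4) (hv : v ^ 2 < A ^ 2 / 4) :
    A ^ 2 ≤ (2 * A - u - v) ^ 2 := by
  nlinarith [sq_nonneg (A - u - v), sq_nonneg (u - v)]

/-- Step 2 in the proof of Theorem 3.8: the radial energy of the antisymmetric zero mode
is at least `(a(−L)² + a(L)²)/(24ε)`. -/
theorem stmt_7 (n : ℕ) (hn : 1 ≤ n) (L : ℝ) (hL : 0 < L)
    (ε : ℝ) (hε0 : 0 < ε) (hε : ε < (1 / 4) * min L (1 / L))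
    (a a' : ℝ → ℝ)
    (hderiv : ∀ t ∈ Set.Icc (-L) L, HasDerivWithinAt a (a' t) (Set.Icc (-L) L) t)
    (hcont : ContinuousOn a' (Set.Icc (-L) L))
    (hodd : a (-L) + a L = 0)
    (w : ℝ → ℝ) (hw : Measurable w)
    (hint : IntervalIntegrable (fun t => (a' t) ^ 2 * (w t) ^ n)
      MeasureTheory.volume (-L) L)
    (hw1 : ∀ t ∈ Set.Icc (-L) L, 1 ≤ w t)
    (hwε : ∀ t ∈ Set.Icc (-L + 2 * ε) (L - 2 * ε), ε⁻¹ ^ 2 ≤ w t) :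
    ∫ t in (-L)..L, (a' t) ^ 2 * (w t) ^ n ≥
      ((a (-L)) ^ 2 + (a L) ^ 2) / (24 * ε) := by
  set I := ∫ t in (-L)..L, (a' t) ^ 2 * (w t) ^ n with hIdef
  -- basic numeric facts
  have hεL : 4 * ε < L := by
    have h1 : min L (1 / L) ≤ L := min_le_left _ _
    nlinarith
  have hLε : L * ε < 1 / 4 := by
    have h1 : min L (1 / L) ≤ 1 / L := min_le_right _ _
    have h2 : ε < (1/4) * (1/L) := lt_of_lt_of_le hε (by linarith)
    have h3 : L * ε < L * ((1/4) * (1/L)) := mul_lt_mul_of_pos_left h2 hL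
    have h4 : L * ((1/4) * (1/L)) = 1/4 := by field_simp
    linarith
  have hε1 : ε < 1 / 4 := by
    rcases le_total L 1 with h | h
    · have : min L (1/L) ≤ 1 := (min_le_left _ _).trans h
      nlinarith
    · have h1 : 1 / L ≤ 1 := by
        rw [div_le_one hL]; exact h
      have : min L (1/L) ≤ 1 := (min_le_right _ _).trans h1
      nlinarith
  have hwn_nonneg : ∀ t ∈ Set.Icc (-L) L, (0:ℝ) ≤ (a' t) ^ 2 * (w t) ^ n := by
    intro t ht
    exact mul_nonneg (sq_nonneg _) (pow_nonneg (le_trans zero_le_one (hw1 t ht)) n)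
  have hI0 : 0 ≤ I := by
    rw [hIdef]
    exact intervalIntegral.integral_nonneg (by linarith) hwn_nonneg
  -- the key estimate
  have key : ∀ c d M : ℝ, -L ≤ c → c ≤ d → d ≤ L → 0 < M →
      (∀ t ∈ Set.Icc c d, M ≤ (w t) ^ n) →
      (a d - a c) ^ 2 ≤ (d - c) / M * I := by
    intro c d M hc hcd hd hM hMw
    have hsub : Set.Icc c d ⊆ Set.Icc (-L) L := Set.Icc_subset_Icc hc hd
    have ha'c : ContinuousOn a' (Set.Icc c d) := hcont.mono hsub
    have hftc : ∫ t in c..d, a' t = a d - a c := by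
      apply intervalIntegral.integral_eq_sub_of_hasDeriv_right_of_le hcd
      · exact fun t ht => ((hderiv t (hsub ht)).continuousWithinAt).mono hsub
      · intro t ht
        have htI : t ∈ Set.Icc (-L) L := hsub (Set.Ioo_subset_Icc_self ht)
        have h := (hderiv t htI).hasDerivAt (Icc_mem_nhds (by linarith [ht.1]) (by linarith [ht.2]))
        exact h.hasDerivWithinAt
      · exact ha'c.intervalIntegrable_of_Icc hcd
    have hcs := cs_interval a' c d hcd ha'c
    rw [hftc] at hcs
    -- pointwise bound on the middle integral
    have hmono1 : ∫ t in c..d, (a' t) ^ 2 ≤ ∫ t in c..d, M⁻¹ * ((a' t) ^ 2 * (w t) ^ n) := by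
      apply intervalIntegral.integral_mono_on hcd
      · exact (ha'c.pow 2).intervalIntegrable_of_Icc hcd
      · apply IntervalIntegrable.const_mul
        apply hint.mono_set
        rw [Set.uIcc_of_le hcd, Set.uIcc_of_le (by linarith : -L ≤ L)]
        exact hsub
      · intro t ht
        have h1 : M ≤ (w t) ^ n := hMw t ht
        have h2 : (a' t) ^ 2 * M ≤ (a' t) ^ 2 * (w t) ^ n :=
          mul_le_mul_of_nonneg_left h1 (sq_nonneg _)
        rw [← mul_le_mul_iff_right₀ hM, ← mul_assoc, mul_inv_cancel₀ (ne_of_gt hM), one_mul, mul_comm M _]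
        exact h2
    have hmono2 : ∫ t in c..d, (a' t) ^ 2 * (w t) ^ n ≤ I := by
      rw [hIdef]
      apply intervalIntegral.integral_mono_interval hc hcd hd
      · filter_upwards [ae_restrict_mem measurableSet_Ioc] with t ht
        exact hwn_nonneg t (Set.Ioc_subset_Icc_self ht)
      · exact hint
    have hmono3 : ∫ t in c..d, M⁻¹ * ((a' t) ^ 2 * (w t) ^ n)
        = M⁻¹ * ∫ t in c..d, (a' t) ^ 2 * (w t) ^ n := by
      exact intervalIntegral.integral_const_mul _ _
    have hd1 : (0:ℝ) ≤ d - c := sub_nonneg.2 hcd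
    calc (a d - a c) ^ 2 ≤ (d - c) * ∫ t in c..d, (a' t) ^ 2 := hcs
      _ ≤ (d - c) * (M⁻¹ * I) := by
          refine mul_le_mul_of_nonneg_left ?_ hd1
          refine hmono1.trans (hmono3.trans_le ?_)
          exact mul_le_mul_of_nonneg_left hmono2 (inv_nonneg.2 hM.le)
      _ = (d - c) / M * I := by ring
  -- abbreviation
  set A := a L with hAdef
  have hAodd : a (-L) = -A := by rw [hAdef]; linarith
  rw [hAodd]
  have hone : ∀ t ∈ Set.Icc (-L) L, (1:ℝ) ≤ (w t) ^ n :=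
    fun t ht => one_le_pow₀ (hw1 t ht)
  by_cases h1 : A ^ 2 / 4 ≤ (a (-L + 2*ε) - a (-L)) ^ 2
  · -- boundary strip on the left
    have hk := key (-L) (-L + 2*ε) 1 le_rfl (by linarith) (by linarith) one_pos
      (fun t ht => hone t (Set.Icc_subset_Icc le_rfl (by linarith) ht))
    have hk' : (a (-L + 2*ε) - a (-L)) ^ 2 ≤ 2 * ε * I := by
      have : (-L + 2*ε - -L) / 1 = 2 * ε := by ring
      rw [this] at hk; exact hk
    have haux4 : 0 ≤ ε * I := mul_nonneg hε0.le hI0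
    rw [ge_iff_le, div_le_iff₀ (by positivity)]
    nlinarith [h1, hk', haux4]
  · by_cases h2 : A ^ 2 / 4 ≤ (a L - a (L - 2*ε)) ^ 2
    · -- boundary strip on the right
      have hk := key (L - 2*ε) L 1 (by linarith) (by linarith) le_rfl one_pos
        (fun t ht => hone t (Set.Icc_subset_Icc (by linarith) le_rfl ht))
      have hk' : (a L - a (L - 2*ε)) ^ 2 ≤ 2 * ε * I := by
        have : (L - (L - 2*ε)) / 1 = 2 * ε := by ring
        rw [this] at hk; exact hk
      have haux4 : 0 ≤ ε * I := mul_nonneg hε0.le hI0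
      rw [ge_iff_le, div_le_iff₀ (by positivity)]
      nlinarith [h2, hk', haux4]
    · -- middle interval
      push_neg at h1 h2
      have hMpos : (0:ℝ) < ε⁻¹ ^ 2 := by positivity
      have hk := key (-L + 2*ε) (L - 2*ε) (ε⁻¹ ^ 2) (by linarith) (by linarith) (by linarith)
        hMpos (fun t ht => by
          have htI : t ∈ Set.Icc (-L) L :=
            Set.Icc_subset_Icc (by linarith) (by linarith) ht
          calc ε⁻¹ ^ 2 ≤ w t := hwε t ht
            _ ≤ (w t) ^ n := le_self_pow₀ (hw1 t htI) (by omega)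
      )
      have heq : (L - 2*ε - (-L + 2*ε)) / (ε⁻¹ ^ 2) = (2*L - 4*ε) * ε ^ 2 := by
        field_simp
        ring
      rw [heq] at hk
      -- lower bound on the middle variation
      have hmid : A ^ 2 ≤ (a (L - 2*ε) - a (-L + 2*ε)) ^ 2 := by
        have hrw : a (L - 2*ε) - a (-L + 2*ε)
            = 2*A - (a (-L + 2*ε) - a (-L)) - (a L - a (L - 2*ε)) := by
          rw [hAodd]; ring
        rw [hrw]
        exact quad_aux A _ _ h1 h2
      have hfin : A ^ 2 ≤ (2*L - 4*ε) * ε ^ 2 * I := le_trans hmid hk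
      rw [ge_iff_le, div_le_iff₀ (by positivity)]
      have haux : 0 ≤ (1/4 - L * ε) * (ε * I) :=
        mul_nonneg (by linarith) (mul_nonneg hε0.le hI0)
      have haux3 : 0 ≤ ε ^ 3 * I := mul_nonneg (by positivity) hI0
      have haux4 : 0 ≤ ε * I := mul_nonneg hε0.le hI0
      linarith [hfin, haux, haux3, haux4]
end

section
/- Let n ≥ 1 be an integer, ε > 0, and L > 3ε. Let a : ℝ → ℝ be continuously differentiable on [−L, L] with a(−L) + a(L) = 0, and suppose |a(t) − a(−L)| ≤ (1/2)|a(−L)| for all t ∈ [−L+2ε, −L+3ε] and |a(t) − a(L)| ≤ (1/2)|a(L)| for all t ∈ [L−3ε, L−2ε]. Let w : ℝ → ℝ be measurable with a′(t)²·w(t)ⁿ integrable on [−L, L], with w(t) ≥ 0 for all t ∈ [−L, L] and w(t) ≥ ε^{−2} for all t ∈ [−L+3ε, L−3ε]. Then ∫_{−L}^{L} a′(t)² w(t)ⁿ dt ≥ (ε^{−2n}/(4L)) · (a(−L)² + a(L)²). -/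
open MeasureTheory intervalIntegral Set

set_option maxHeartbeats 1000000 in
/-- Middle case of Step 2 in the proof of Theorem 3.8: when the antisymmetric zero mode
stays within half of its boundary value near both boundary components, Cauchy–Schwarz on
the middle interval gives a lower bound `ε^{−2n}(a(−L)² + a(L)²)/(4L)`. -/
theorem stmt_8 (n : ℕ) (hn : 1 ≤ n) (ε L : ℝ) (hε0 : 0 < ε) (hL : 3 * ε < L)
    (a a' : ℝ → ℝ)
    (hderiv : ∀ t ∈ Set.Icc (-L) L, HasDerivWithinAt a (a' t) (Set.Icc (-L) L) t)
    (hcont : ContinuousOn a' (Set.Icc (-L) L))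
    (hodd : a (-L) + a L = 0)
    (hnear₁ : ∀ t ∈ Set.Icc (-L + 2 * ε) (-L + 3 * ε),
      |a t - a (-L)| ≤ (1 / 2) * |a (-L)|)
    (hnear₂ : ∀ t ∈ Set.Icc (L - 3 * ε) (L - 2 * ε),
      |a t - a L| ≤ (1 / 2) * |a L|)
    (w : ℝ → ℝ) (hw : Measurable w)
    (hint : IntervalIntegrable (fun t => (a' t) ^ 2 * (w t) ^ n)
      MeasureTheory.volume (-L) L)
    (hw0 : ∀ t ∈ Set.Icc (-L) L, 0 ≤ w t)
    (hwε : ∀ t ∈ Set.Icc (-L + 3 * ε) (L - 3 * ε), ε⁻¹ ^ 2 ≤ w t) :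
    ∫ t in (-L)..L, (a' t) ^ 2 * (w t) ^ n ≥
      (ε ^ (2 * n))⁻¹ / (4 * L) * ((a (-L)) ^ 2 + (a L) ^ 2) := by
  have hL0 : 0 < L := by linarith
  set c := a (-L) with hc
  have haL : a L = -c := by linarith
  set t₁ := -L + 3 * ε with ht₁def
  set t₂ := L - 3 * ε with ht₂def
  have ht₁₂ : t₁ < t₂ := by simp only [ht₁def, ht₂def]; linarith
  have hsub : Icc t₁ t₂ ⊆ Icc (-L) L :=
    Icc_subset_Icc (by simp only [ht₁def]; linarith) (by simp only [ht₂def]; linarith)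
  have huIcc : uIcc t₁ t₂ ⊆ uIcc (-L) L := by
    rw [uIcc_of_le ht₁₂.le, uIcc_of_le (by linarith : -L ≤ L)]; exact hsub
  -- derivative at interior points
  have hderivAt : ∀ x ∈ Set.uIcc t₁ t₂, HasDerivAt a (a' x) x := by
    intro x hx
    rw [Set.uIcc_of_le ht₁₂.le] at hx
    exact (hderiv x (hsub hx)).hasDerivAt
      (Icc_mem_nhds (by have := hx.1; simp only [ht₁def] at this ⊢; linarith)
        (by have := hx.2; simp only [ht₂def] at this ⊢; linarith))
  have hcont' : ContinuousOn a' (uIcc t₁ t₂) := hcont.mono (by rwa [uIcc_of_le ht₁₂.le])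
  have ha'int : IntervalIntegrable a' volume t₁ t₂ := hcont'.intervalIntegrable
  have hsqint : IntervalIntegrable (fun t => (a' t) ^ 2) volume t₁ t₂ :=
    (hcont'.pow 2).intervalIntegrable
  have hFTC : ∫ t in t₁..t₂, a' t = a t₂ - a t₁ :=
    integral_eq_sub_of_hasDerivAt hderivAt ha'int
  set S := ∫ t in t₁..t₂, a' t with hSdef
  set I := ∫ t in t₁..t₂, (a' t) ^ 2 with hIdef
  set T := t₂ - t₁ with hTdef
  have hT0 : 0 < T := by simp only [hTdef]; linarith
  have hI0 : 0 ≤ I := by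
    refine intervalIntegral.integral_nonneg ht₁₂.le fun u _ => ?_
    positivity
  -- Cauchy–Schwarz: S^2 ≤ T * I
  have hCS : S ^ 2 ≤ T * I := by
    have key : ∀ l : ℝ, 0 ≤ I - 2 * l * S + l ^ 2 * T := by
      intro l
      have h1 : IntervalIntegrable (fun t => 2 * l * a' t) volume t₁ t₂ :=
        (ha'int.const_mul (2 * l))
      have h2 : IntervalIntegrable (fun _ : ℝ => l ^ 2) volume t₁ t₂ :=
        intervalIntegrable_const
      have hexp : ∫ t in t₁..t₂, (a' t - l) ^ 2
          = I - 2 * l * S + l ^ 2 * T := by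
        have : (fun t => (a' t - l) ^ 2)
            = fun t => ((a' t) ^ 2 - 2 * l * a' t) + l ^ 2 := by
          funext t; ring
        rw [this, intervalIntegral.integral_add (hsqint.sub h1) h2,
          intervalIntegral.integral_sub hsqint h1,
          intervalIntegral.integral_const_mul, intervalIntegral.integral_const]
        simp only [hIdef, hSdef, hTdef, smul_eq_mul]
        ring
      have hpos : 0 ≤ ∫ t in t₁..t₂, (a' t - l) ^ 2 :=
        intervalIntegral.integral_nonneg ht₁₂.le fun u _ => by positivity
      linarith [hexp ▸ hpos]
    have h := key (S / T)
    have hT0' : T ≠ 0 := ne_of_gt hT0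
    have hh : T * (I - 2 * (S / T) * S + (S / T) ^ 2 * T) = T * I - S ^ 2 := by
      field_simp; ring
    nlinarith [mul_nonneg hT0.le h]
  -- |S| ≥ |c|
  have hSc : c ^ 2 ≤ S ^ 2 := by
    have h1 : |a t₁ - c| ≤ (1 / 2) * |c| := by
      refine hnear₁ t₁ ⟨by linarith, le_refl _⟩
    have h2 : |a t₂ + c| ≤ (1 / 2) * |c| := by
      have := hnear₂ t₂ ⟨le_refl _, by linarith⟩
      rwa [haL, sub_neg_eq_add, abs_neg] at this
    have hS : S = a t₂ - a t₁ := hFTC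
    rcases abs_cases c with ⟨hce, hcs⟩ | ⟨hce, hcs⟩ <;>
      rcases abs_le.mp h1 with ⟨h1a, h1b⟩ <;>
      rcases abs_le.mp h2 with ⟨h2a, h2b⟩ <;>
      nlinarith [hS, hce, hcs]
  -- pointwise weight bound on the middle interval
  set K := (ε⁻¹ ^ 2) ^ n with hKdef
  have hK0 : 0 < K := by positivity
  have hmidint : IntervalIntegrable (fun t => (a' t) ^ 2 * (w t) ^ n) volume t₁ t₂ :=
    hint.mono_set huIcc
  have hmid : K * I ≤ ∫ t in t₁..t₂, (a' t) ^ 2 * (w t) ^ n := by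
    rw [hIdef, ← intervalIntegral.integral_const_mul]
    refine intervalIntegral.integral_mono_on ht₁₂.le
      (hsqint.const_mul K) hmidint fun u hu => ?_
    have hwu : ε⁻¹ ^ 2 ≤ w u := hwε u hu
    have : K ≤ (w u) ^ n := pow_le_pow_left₀ (by positivity) hwu n
    nlinarith [sq_nonneg (a' u), hK0.le]
  -- extend integral to [-L, L]
  have hleft : IntervalIntegrable (fun t => (a' t) ^ 2 * (w t) ^ n) volume (-L) t₁ :=
    hint.mono_set (by
      rw [uIcc_of_le (by linarith : -L ≤ t₁), uIcc_of_le (by linarith : -L ≤ L)]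
      exact Icc_subset_Icc le_rfl (by simp only [ht₁def]; linarith))
  have hright : IntervalIntegrable (fun t => (a' t) ^ 2 * (w t) ^ n) volume t₂ L :=
    hint.mono_set (by
      rw [uIcc_of_le (by linarith : t₂ ≤ L), uIcc_of_le (by linarith : -L ≤ L)]
      exact Icc_subset_Icc (by simp only [ht₂def]; linarith) le_rfl)
  have hsplit1 : (∫ t in (-L)..t₁, (a' t) ^ 2 * (w t) ^ n)
      + (∫ t in t₁..L, (a' t) ^ 2 * (w t) ^ n)
      = ∫ t in (-L)..L, (a' t) ^ 2 * (w t) ^ n :=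
    intervalIntegral.integral_add_adjacent_intervals hleft
      (hint.mono_set (by
        rw [uIcc_of_le (by linarith : t₁ ≤ L), uIcc_of_le (by linarith : -L ≤ L)]
        exact Icc_subset_Icc (by simp only [ht₁def]; linarith) le_rfl))
  have hsplit2 : (∫ t in t₁..t₂, (a' t) ^ 2 * (w t) ^ n)
      + (∫ t in t₂..L, (a' t) ^ 2 * (w t) ^ n)
      = ∫ t in t₁..L, (a' t) ^ 2 * (w t) ^ n :=
    intervalIntegral.integral_add_adjacent_intervals hmidint hright
  have hleft0 : 0 ≤ ∫ t in (-L)..t₁, (a' t) ^ 2 * (w t) ^ n := by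
    refine intervalIntegral.integral_nonneg (by linarith) fun u hu => ?_
    have : 0 ≤ w u := hw0 u ⟨hu.1, by have := hu.2; simp only [ht₁def] at this; linarith⟩
    positivity
  have hright0 : 0 ≤ ∫ t in t₂..L, (a' t) ^ 2 * (w t) ^ n := by
    refine intervalIntegral.integral_nonneg (by linarith) fun u hu => ?_
    have : 0 ≤ w u := hw0 u ⟨by have := hu.1; simp only [ht₂def] at this; linarith, hu.2⟩
    positivity
  have htot : K * I ≤ ∫ t in (-L)..L, (a' t) ^ 2 * (w t) ^ n := by linarith
  -- finish
  have hKeq : (ε ^ (2 * n))⁻¹ = K := by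
    rw [hKdef, ← inv_pow, ← pow_mul]
  rw [ge_iff_le, hKeq, haL]
  have hT2L : T ≤ 2 * L := by simp only [hTdef, ht₁def, ht₂def]; linarith
  have h2LI : c ^ 2 ≤ 2 * L * I := by nlinarith
  have : K * c ^ 2 ≤ 2 * L * (K * I) := by nlinarith
  have hfinal : K / (4 * L) * (c ^ 2 + (-c) ^ 2) ≤ K * I := by
    rw [div_mul_eq_mul_div, div_le_iff₀ (by linarith : (0:ℝ) < 4 * L)]
    nlinarith
  linarith
end

section
/- Let b ≥ 2 be an integer, and let a₁, …, a_b and c₁, …, c_b be real numbers with c_j > 0 for every j, ∑_{j=1}^{b} a_j c_j = 0, and ∑_{j=1}^{b} a_j² ≥ 1/2. Then there exist indices i ≠ k in {1, …, b} such that a_i² ≥ 1/(2b) and a_i · a_k · c_k ≤ −(1/(b−1)) · a_i² · c_i. -/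
/-- Pigeonhole argument in the proof of Proposition 3.5: from `∑ aⱼcⱼ = 0` and
`∑ aⱼ² ≥ 1/2` with all `cⱼ > 0`, there are indices `i ≠ k` with `aᵢ² ≥ 1/(2b)` and
`aᵢ·a_k·c_k ≤ −aᵢ²·cᵢ/(b−1)`. -/
theorem stmt_9 (b : ℕ) (hb : 2 ≤ b) (a c : Fin b → ℝ)
    (hc : ∀ j, 0 < c j)
    (horth : ∑ j, a j * c j = 0)
    (hnorm : (1 : ℝ) / 2 ≤ ∑ j, (a j) ^ 2) :
    ∃ i k : Fin b, i ≠ k ∧ (a i) ^ 2 ≥ 1 / (2 * (b : ℝ)) ∧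
      a i * a k * c k ≤ -(1 / ((b : ℝ) - 1)) * (a i) ^ 2 * c i := by
  have hb0 : (0 : ℝ) < b := by positivity
  have hb1 : (0 : ℝ) < (b : ℝ) - 1 := by
    have : (2 : ℝ) ≤ (b : ℝ) := by exact_mod_cast hb
    linarith
  -- pick i maximizing (a j)^2
  obtain ⟨i, -, hi⟩ := Finset.exists_max_image Finset.univ (fun j => (a j) ^ 2)
    ⟨⟨0, by omega⟩, Finset.mem_univ _⟩
  have hmax : ∀ j, (a j) ^ 2 ≤ (a i) ^ 2 := fun j => hi j (Finset.mem_univ j)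
  have hi2 : (a i) ^ 2 ≥ 1 / (2 * (b : ℝ)) := by
    have hsum : ∑ j, (a j) ^ 2 ≤ (b : ℝ) * (a i) ^ 2 := by
      calc ∑ j : Fin b, (a j) ^ 2 ≤ ∑ _j : Fin b, (a i) ^ 2 :=
            Finset.sum_le_sum fun j _ => hmax j
        _ = (b : ℝ) * (a i) ^ 2 := by simp [Finset.sum_const, mul_comm]
    rw [ge_iff_le, div_le_iff₀ (by positivity)]
    nlinarith
  -- sum over j ≠ i
  have hsum : ∑ j ∈ Finset.univ.erase i, a i * (a j * c j) = -((a i) ^ 2 * c i) := by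
    have := Finset.add_sum_erase Finset.univ (fun j => a j * c j) (Finset.mem_univ i)
    have h2 : a i * c i + ∑ j ∈ Finset.univ.erase i, a j * c j = 0 := by
      rw [this]; exact horth
    have h3 : ∑ j ∈ Finset.univ.erase i, a j * c j = -(a i * c i) := by linarith
    rw [← Finset.mul_sum, h3]; ring
  have hcard : (Finset.univ.erase i).card = b - 1 := by
    simp [Finset.card_erase_of_mem]
  by_contra hcon
  push_neg at hcon
  have hgt : ∀ k ∈ Finset.univ.erase i, -(1 / ((b : ℝ) - 1)) * (a i) ^ 2 * c i
      < a i * (a k * c k) := by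
    intro k hk
    have hki : i ≠ k := fun h => (Finset.mem_erase.mp hk).1 h.symm
    have := hcon i k hki hi2
    linarith [this, (by ring : a i * a k * c k = a i * (a k * c k))]
  have hne : (Finset.univ.erase i).Nonempty := by
    rw [← Finset.card_pos, hcard]; omega
  have hsumgt : ∑ j ∈ Finset.univ.erase i,
      (-(1 / ((b : ℝ) - 1)) * (a i) ^ 2 * c i) < ∑ j ∈ Finset.univ.erase i, a i * (a j * c j) :=
    Finset.sum_lt_sum_of_nonempty hne hgt
  rw [Finset.sum_const, hcard, hsum] at hsumgt
  have hcast : ((b - 1 : ℕ) : ℝ) = (b : ℝ) - 1 := by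
    have : (1 : ℕ) ≤ b := by omega
    push_cast [this]; ring
  rw [nsmul_eq_mul, hcast] at hsumgt
  have : ((b:ℝ) - 1) * (-(1 / ((b : ℝ) - 1)) * (a i) ^ 2 * c i) = -((a i)^2 * c i) := by
    field_simp
  linarith [hsumgt, this]
end
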